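/- Let $S = K[X_1,\ldots,X_n]$ over a perfect field $K$ of characteristic $p>0$, $f \in S$, and $I \subset S$ an ideal. Then $\mathrm{Tr}(fI) \subseteq I$ (i.e., $I$ is compatibly split with respect to $f \star \mathrm{Tr}$) if and only if $f \in I^{[p]} : I$, where $I^{[p]} = (x^p : x \in I)$. -/

import Mathlib

open MvPolynomial
open scoped Classical

/-- The trace map `Tr : F_*S → S`, the projection onto the basis element
`X_1^{p-1} ⋯ X_n^{p-1}` of the monomial basis of `F_*S` over `S`. -/
noncomputable def Tr (n p : ℕ) [Fact p.Prime] (K : Type) [Field K] [CharP K p]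
    [PerfectRing K p] (g : MvPolynomial (Fin n) K) : MvPolynomial (Fin n) K :=
  ∑ u ∈ g.support,
    if (∀ j, u j % p = p - 1) then
      monomial
        (u.mapRange (fun a => (a + 1) / p - 1)
          (by simp [Nat.div_eq_of_lt (Fact.out : p.Prime).one_lt]))
        ((frobeniusEquiv K p).symm (coeff u g))
    else 0

/-- The Frobenius power `I^{[p]}`: the ideal generated by `p`-th powers of elements of `I`. -/
def frobPow {R : Type} [CommRing R] (I : Ideal R) (p : ℕ) : Ideal R :=
  Ideal.span ((fun x => x ^ p) '' (I : Set R))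

/-!
`Tr` is `p⁻¹`-linear: `Tr (a ^ p * s) = a * Tr s`, so `Tr (s * h) ∈ I` for every `s` as soon as
`h ∈ I^{[p]}`. Conversely every `h` is recovered from its traces,
`h = ∑_{e ≤ (p-1,…,p-1)} Tr (X^{(p-1,…,p-1) - e} h) ^ p X^e`, so `Tr (S h) ⊆ I` forces
`h ∈ I^{[p]}`. Applying the resulting description of `I^{[p]}` to `h = f g` with `g ∈ I`, and
absorbing `s` into `g`, gives the criterion.
-/

noncomputable def traceExp (n p : ℕ) : Fin n →₀ ℕ :=
  Finsupp.equivFunOnFinite.symm fun _ => p - 1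

@[simp] lemma traceExp_apply (n p : ℕ) (j : Fin n) : traceExp n p j = p - 1 := rfl

lemma exists_eq_smul_add_traceExp {n p : ℕ} {e : Fin n →₀ ℕ} (he : ∀ j, e j % p = p - 1) :
    ∃ v, e = p • v + traceExp n p :=
  ⟨e.mapRange (· / p) (Nat.zero_div p), Finsupp.ext fun j => by simp [← he j, Nat.div_add_mod]⟩

lemma smul_add_traceExp_mod {n p : ℕ} (v : Fin n →₀ ℕ) (j : Fin n) :
    (p • v + traceExp n p) j % p = p - 1 := by
  simp [Nat.self_sub_mod]

lemma mapRange_smul_add_traceExp {n p : ℕ} (hp : 0 < p) (v : Fin n →₀ ℕ) :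
    (p • v + traceExp n p).mapRange (fun a => (a + 1) / p - 1)
      (Nat.sub_eq_zero_of_le (Nat.div_le_self 1 p)) = v := by
  ext j
  have hsucc : p * v j + (p - 1) + 1 = p * (v j + 1) := by rw [Nat.mul_succ]; omega
  simp [hsucc, Nat.mul_div_cancel_left _ hp]

lemma mod_eq_pred_and_mapRange_eq_iff {n p : ℕ} (hp : 0 < p) (u v : Fin n →₀ ℕ) :
    ((∀ j, u j % p = p - 1) ∧ u.mapRange (fun a => (a + 1) / p - 1)
        (Nat.sub_eq_zero_of_le (Nat.div_le_self 1 p)) = v) ↔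
      u = p • v + traceExp n p := by
  constructor
  · rintro ⟨hu, rfl⟩
    obtain ⟨w, rfl⟩ := exists_eq_smul_add_traceExp hu
    rw [mapRange_smul_add_traceExp hp]
  · rintro rfl
    exact ⟨smul_add_traceExp_mod v, mapRange_smul_add_traceExp hp v⟩

lemma Nat.pred_sub_add_mod_eq_pred_iff {p a d : ℕ} (hp : 0 < p) (ha : a ≤ p - 1) :
    (p - 1 - a + d) % p = p - 1 ↔ a = d % p := by
  have hpred : p - 1 = p - 1 - a + a := by omega
  calc (p - 1 - a + d) % p = p - 1 ↔ p - 1 - a + d ≡ p - 1 - a + a [MOD p] := by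
        rw [← hpred, Nat.ModEq, Nat.mod_eq_of_lt (a := p - 1) (by omega)]
    _ ↔ d ≡ a [MOD p] := ⟨Nat.ModEq.add_left_cancel' _, Nat.ModEq.add_left _⟩
    _ ↔ a = d % p := by rw [Nat.ModEq, Nat.mod_eq_of_lt (a := a) (by omega), eq_comm]

section Trace

variable {n p : ℕ} [Fact p.Prime] {K : Type} [Field K] [CharP K p] [PerfectRing K p]

lemma coeff_Tr (g : MvPolynomial (Fin n) K) (v : Fin n →₀ ℕ) :
    coeff v (Tr n p K g) = (frobeniusEquiv K p).symm (coeff (p • v + traceExp n p) g) := by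
  simp only [Tr, coeff_sum, apply_ite (coeff v), coeff_monomial, coeff_zero, ← ite_and,
    mod_eq_pred_and_mapRange_eq_iff (Fact.out : p.Prime).pos, Finset.sum_ite_eq']
  split_ifs with h
  · rfl
  · rw [notMem_support_iff.mp h, map_zero]

lemma Tr_add (g h : MvPolynomial (Fin n) K) : Tr n p K (g + h) = Tr n p K g + Tr n p K h := by
  ext v
  simp only [coeff_Tr, coeff_add, map_add]

lemma Tr_zero : Tr n p K 0 = 0 := by
  ext v
  simp only [coeff_Tr, coeff_zero, map_zero]

lemma Tr_monomial_smul_add_traceExp (v : Fin n →₀ ℕ) (c : K) :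
    Tr n p K (monomial (p • v + traceExp n p) c) = monomial v ((frobeniusEquiv K p).symm c) := by
  have hp : p ≠ 0 := (Fact.out : p.Prime).ne_zero
  ext u
  simp only [coeff_Tr, coeff_monomial, add_left_inj, smul_right_injective _ hp |>.eq_iff]
  split_ifs <;> simp

lemma Tr_monomial_of_not_mod_eq_pred {e : Fin n →₀ ℕ} (he : ¬ ∀ j, e j % p = p - 1) (c : K) :
    Tr n p K (monomial e c) = 0 := by
  ext u
  have hne : e ≠ p • u + traceExp n p := fun h => he fun j => h ▸ smul_add_traceExp_mod u j
  rw [coeff_Tr, coeff_monomial, if_neg hne, map_zero, coeff_zero]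

lemma Tr_pow_mul (a s : MvPolynomial (Fin n) K) : Tr n p K (a ^ p * s) = a * Tr n p K s := by
  induction a using MvPolynomial.induction_on' with
  | add a b ha hb => rw [add_pow_char, add_mul, Tr_add, ha, hb, add_mul]
  | monomial w c =>
    induction s using MvPolynomial.induction_on' with
    | add s t hs ht => rw [mul_add, Tr_add, hs, ht, Tr_add, mul_add]
    | monomial e d =>
      rw [monomial_pow, monomial_mul]
      by_cases he : ∀ j, e j % p = p - 1
      · obtain ⟨v, rfl⟩ := exists_eq_smul_add_traceExp he
        rw [← add_assoc, ← smul_add, Tr_monomial_smul_add_traceExp, Tr_monomial_smul_add_traceExp,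
          monomial_mul, map_mul, frobeniusEquiv_symm_pow]
      · have hwe : ¬ ∀ j, (p • w + e) j % p = p - 1 := by
          simpa [Nat.mul_add_mod] using he
        rw [Tr_monomial_of_not_mod_eq_pred he, Tr_monomial_of_not_mod_eq_pred hwe, mul_zero]

lemma sum_Tr_monomial_mul_pow_mul_monomial (h : MvPolynomial (Fin n) K) :
    ∑ e ∈ Finset.Iic (traceExp n p),
      Tr n p K (monomial (traceExp n p - e) 1 * h) ^ p * monomial e 1 = h := by
  have hp : 0 < p := (Fact.out : p.Prime).pos
  induction h using MvPolynomial.induction_on' with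
  | add g h hg hh =>
    simp_rw [mul_add, Tr_add, add_pow_char, add_mul, Finset.sum_add_distrib, hg, hh]
  | monomial d c =>
    set q := d.mapRange (· / p) (Nat.zero_div p)
    set r := d.mapRange (· % p) (Nat.zero_mod p)
    have hr : r ≤ traceExp n p := fun j => by
      have := Nat.mod_lt (d j) hp
      simp only [r, Finsupp.mapRange_apply, traceExp_apply]
      omega
    rw [Finset.sum_eq_single_of_mem r (Finset.mem_Iic.mpr hr)]
    · have hexp : traceExp n p - r + d = p • q + traceExp n p := by
        ext j
        have := Nat.div_add_mod (d j) p
        have := Nat.mod_lt (d j) hp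
        simp only [q, r, Finsupp.add_apply, Finsupp.tsub_apply, Finsupp.smul_apply, smul_eq_mul,
          Finsupp.mapRange_apply, traceExp_apply]
        omega
      have hdecomp : p • q + r = d := by
        ext j
        simp [q, r, Nat.div_add_mod]
      rw [monomial_mul, one_mul, hexp, Tr_monomial_smul_add_traceExp, monomial_pow,
        frobeniusEquiv_symm_pow_p, monomial_mul, mul_one, hdecomp]
    · intro e he hne
      rw [monomial_mul, one_mul, Tr_monomial_of_not_mod_eq_pred, zero_pow hp.ne', zero_mul]
      refine fun hmod => hne (Finsupp.ext fun j => ?_)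
      have hej := hmod j
      simp only [Finsupp.add_apply, Finsupp.tsub_apply, traceExp_apply] at hej
      exact (Nat.pred_sub_add_mod_eq_pred_iff hp (Finset.mem_Iic.mp he j)).mp hej

lemma Tr_mul_mem_of_mem_frobPow {I : Ideal (MvPolynomial (Fin n) K)} {h : MvPolynomial (Fin n) K}
    (hh : h ∈ frobPow I p) (s : MvPolynomial (Fin n) K) : Tr n p K (s * h) ∈ I := by
  induction hh using Submodule.span_induction generalizing s with
  | mem x hx =>
    obtain ⟨a, ha, rfl⟩ := hx
    rw [mul_comm, Tr_pow_mul]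
    exact I.mul_mem_right _ ha
  | zero => rw [mul_zero, Tr_zero]; exact I.zero_mem
  | add x y _ _ hx hy => rw [mul_add, Tr_add]; exact I.add_mem (hx s) (hy s)
  | smul a x _ hx => rw [smul_eq_mul, ← mul_assoc]; exact hx (s * a)

lemma mem_frobPow_iff (I : Ideal (MvPolynomial (Fin n) K)) (h : MvPolynomial (Fin n) K) :
    h ∈ frobPow I p ↔ ∀ s, Tr n p K (s * h) ∈ I := by
  refine ⟨Tr_mul_mem_of_mem_frobPow, fun H => ?_⟩
  rw [← sum_Tr_monomial_mul_pow_mul_monomial h]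
  exact Ideal.sum_mem _ fun e _ => Ideal.mul_mem_right _ _ (Ideal.subset_span ⟨_, H _, rfl⟩)

end Trace

/-- Fedder's criterion for compatibility. For `f ∈ S = K[X_1,…,X_n]`
(`K` perfect of characteristic `p`) and an ideal `I ⊆ S`: `Tr(f·I) ⊆ I` (i.e. `I` is
compatibly split with respect to `f ⋆ Tr`) if and only if `f ∈ I^{[p]} : I`. -/
theorem stmt6 (n p : ℕ) [Fact p.Prime] (K : Type) [Field K] [CharP K p] [PerfectRing K p]
    (f : MvPolynomial (Fin n) K) (I : Ideal (MvPolynomial (Fin n) K)) :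
    (∀ g ∈ I, Tr n p K (f * g) ∈ I) ↔ f ∈ Submodule.colon (frobPow I p) I := by
  simp_rw [Submodule.mem_colon, smul_eq_mul, mem_frobPow_iff]
  constructor
  · intro H g hg s
    rw [mul_left_comm]
    exact H _ (I.mul_mem_left s hg)
  · intro H g hg
    simpa using H g hg 1
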